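/- arXiv:math/0508168 — 4 statements merged into one kernel-verified Lean document; each statement's English description precedes it below -/
import Mathlib

section
/- The function h satisfies the six-term identity h(λ)h(λ-1) - h(μ)h(ν) + h(μ-ν)h(ν) - h(μ-ν)h(λ) + h(ν-μ)h(μ) - h(ν-μ)h(λ) = 0 for all λ, μ, ν where defined. -/
/-!
In the multiplicative variable `u = q^{-2λ}`, `h` is the function `qh q u` below, a
`q`-deformation of `coth` with the two functional equations
`qh a + qh a⁻¹ = q + q⁻¹` and `qh (a * b) * (qh a + qh b - (q + q⁻¹)) = qh a * qh b - 1`.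
The six-term sum is the difference of
`qh x * (qh (q² x) - qh (y / z) - qh (z / y))` and
`qh y * qh z - qh (y / z) * qh z - qh (z / y) * qh y`;
the first functional equation turns the first group into `qh x * (qh (q² x) - (q + q⁻¹))`,
which is `-1` by direct computation, and the addition formula with `a = y / z`, `b = z`
shows that the second group is `-1` as well.
-/

section

variable {K : Type*} [Field K] {q : K}

def qh (q u : K) : K := q * (u - (q ^ 2)⁻¹) / (u - 1)

theorem qh_add_qh_inv (hq : q ≠ 0) {a : K} (ha0 : a ≠ 0) (ha1 : a ≠ 1) :
    qh q a + qh q a⁻¹ = q + q⁻¹ := by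
  have ha1' : a - 1 ≠ 0 := sub_ne_zero.mpr ha1
  have hinv1 : a⁻¹ - 1 ≠ 0 := sub_ne_zero.mpr (inv_ne_one.mpr ha1)
  unfold qh
  field_simp
  ring

theorem qh_mul_qh_sq_mul_sub (hq : q ≠ 0) {x : K} (hx : x ≠ 1) (hqx : q ^ 2 * x ≠ 1) :
    qh q x * (qh q (q ^ 2 * x) - (q + q⁻¹)) = -1 := by
  have hx' : x - 1 ≠ 0 := sub_ne_zero.mpr hx
  have hqx' : q ^ 2 * x - 1 ≠ 0 := sub_ne_zero.mpr hqx
  unfold qh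
  field_simp
  ring

theorem qh_mul_mul_eq (hq : q ≠ 0) {a b : K} (ha : a ≠ 1) (hb : b ≠ 1) (hab : a * b ≠ 1) :
    qh q (a * b) * (qh q a + qh q b - (q + q⁻¹)) = qh q a * qh q b - 1 := by
  have ha' : a - 1 ≠ 0 := sub_ne_zero.mpr ha
  have hb' : b - 1 ≠ 0 := sub_ne_zero.mpr hb
  have hab' : a * b - 1 ≠ 0 := sub_ne_zero.mpr hab
  unfold qh
  field_simp
  ring

end

theorem stmt_5_general (q x y z : ℂ) (hq : q ≠ 0)
    (H : ℂ → ℂ) (hH : ∀ u, H u = q * (u - (q ^ 2)⁻¹) / (u - 1))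
    (hx1 : x ≠ 1) (hy0 : y ≠ 0) (hy1 : y ≠ 1)
    (hz0 : z ≠ 0) (hz1 : z ≠ 1) (hqx : q ^ 2 * x ≠ 1) (hyz : y ≠ z) :
    H x * H (q ^ 2 * x) - H y * H z + H (y / z) * H z - H (y / z) * H x
      + H (z / y) * H y - H (z / y) * H x = 0 := by
  obtain rfl : H = qh q := funext hH
  have hyz1 : y / z ≠ 1 := fun h => hyz ((div_eq_one_iff_eq hz0).mp h)
  have hinv := qh_add_qh_inv hq (div_ne_zero hy0 hz0) hyz1
  rw [inv_div] at hinv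
  have hshift := qh_mul_qh_sq_mul_sub hq hx1 hqx
  have hadd := qh_mul_mul_eq hq hyz1 hz1 (by rwa [div_mul_cancel₀ _ hz0])
  rw [div_mul_cancel₀ _ hz0] at hadd
  linear_combination hshift - hadd + (qh q y - qh q x) * hinv

/-- six-term identity for `h`. With `x = q^{-2λ}`, `y = q^{-2μ}`, `z = q^{-2ν}`
and `H(u) = q(u - q^{-2})/(u - 1)`, so that `h(λ-1) = H(q²x)`, `h(μ-ν) = H(y/z)`,
`h(ν-μ) = H(z/y)`:
`H(x)H(q²x) - H(y)H(z) + H(y/z)H(z) - H(y/z)H(x) + H(z/y)H(y) - H(z/y)H(x) = 0`,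
whenever all denominators are nonzero. -/
theorem stmt_5 (q x y z : ℂ) (hq : q ≠ 0) (hq2 : q ^ 2 ≠ 1)
    (H : ℂ → ℂ) (hH : ∀ u, H u = q * (u - (q ^ 2)⁻¹) / (u - 1))
    (hx0 : x ≠ 0) (hx1 : x ≠ 1) (hy0 : y ≠ 0) (hy1 : y ≠ 1)
    (hz0 : z ≠ 0) (hz1 : z ≠ 1) (hqx : q ^ 2 * x ≠ 1) (hyz : y ≠ z) :
    H x * H (q ^ 2 * x) - H y * H z + H (y / z) * H z - H (y / z) * H x
      + H (z / y) * H y - H (z / y) * H x = 0 :=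
  stmt_5_general q x y z hq H hH hx1 hy0 hy1 hz0 hz1 hqx hyz
end

section
/- (Hall–Littlewood identity for the zero partition) For indeterminates x_1, …, x_r and a parameter t: ∑_{σ ∈ S_r} ∏_{i<j} (x_{σ(i)} - t·x_{σ(j)})/(x_{σ(i)} - x_{σ(j)}) = ∏_{i=1}^r (1 - t^i)/(1 - t). -/
/-!
Grouping the permutations by `σ 0 = p` splits off the factor
`∏_{q ≠ p} (x_p - t x_q) / (x_p - x_q)`, and what remains is the same sum for the other `r - 1`
points. By induction it therefore suffices that
`∑_p ∏_{q ≠ p} (x_p - t x_q) / (x_p - x_q) = (1 - t ^ r) / (1 - t)`.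
If no `x_p` vanishes, this is Lagrange interpolation: the polynomial `F` with
`X * F = ∏_q (X - t x_q) - t ^ r ∏_q (X - x_q)` has degree `< r`, takes the value
`(1 - t) ∏_{q ≠ p} (x_p - t x_q)` at `x_p`, and its coefficient of `X ^ (r - 1)` is `1 - t ^ r`.
A node `x_p = 0` contributes `t ^ (r - 1)` and drops out of the other summands, leaving the
nonvanishing case for the remaining `r - 1` nodes.
-/

open Finset Polynomial

lemma Lagrange.coeff_zero_nodal {R ι : Type*} [CommRing R] (s : Finset ι) (v : ι → R) :
    (nodal s v).coeff 0 = ∏ j ∈ s, -v j := by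
  simp [coeff_zero_eq_eval_zero, eval_nodal]

section LagrangeSum

variable {K ι : Type*} [Field K] [DecidableEq ι]

lemma sum_prod_erase_sub_mul_div_sub_of_ne_zero {t : K} (ht : t ≠ 1) {s : Finset ι}
    {x : ι → K} (hx : Set.InjOn x s) (hx0 : ∀ k ∈ s, x k ≠ 0) :
    ∑ k ∈ s, ∏ j ∈ s.erase k, (x k - t * x j) / (x k - x j) = (1 - t ^ #s) / (1 - t) := by
  rcases s.eq_empty_or_nonempty with rfl | hs
  · simp
  set P := Lagrange.nodal s (fun j => t * x j) - C (t ^ #s) * Lagrange.nodal s x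
  have hP0 : P.coeff 0 = 0 := by
    simp only [P, coeff_sub, coeff_C_mul, Lagrange.coeff_zero_nodal, mul_neg, ← prod_const,
      ← prod_mul_distrib]
    exact sub_self _
  have hPdeg : P.natDegree ≤ #s :=
    (natDegree_sub_le _ _).trans (max_le (Lagrange.natDegree_nodal).le
      ((natDegree_C_mul_le _ _).trans Lagrange.natDegree_nodal.le))
  have hFdeg : P.divX.degree < #s := by
    refine (degree_lt_iff_coeff_zero _ _).2 fun m hm => ?_
    rw [coeff_divX]
    exact coeff_eq_zero_of_natDegree_lt (by omega)
  have hFtop : P.divX.coeff (#s - 1) = 1 - t ^ #s := by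
    rw [coeff_divX, Nat.sub_add_cancel (card_pos.2 hs), coeff_sub, coeff_C_mul]
    have hmonic (v : ι → K) : (Lagrange.nodal s v).coeff #s = 1 := by
      rw [← Lagrange.natDegree_nodal (v := v)]
      exact Lagrange.nodal_monic.coeff_natDegree
    rw [hmonic, hmonic, mul_one]
  have hFx : ∀ k ∈ s, P.divX.eval (x k) = (1 - t) * ∏ j ∈ s.erase k, (x k - t * x j) := by
    intro k hk
    have hxk : P.eval (x k) = x k * ((1 - t) * ∏ j ∈ s.erase k, (x k - t * x j)) := by
      simp only [P, eval_sub, eval_mul, eval_C, Lagrange.eval_nodal, ← mul_prod_erase s _ hk,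
        sub_self, zero_mul, mul_zero, sub_zero]
      ring
    have hPX : P.divX * X = P := by simpa [hP0] using divX_mul_X_add P
    apply mul_left_cancel₀ (hx0 k hk)
    rw [← hxk, ← hPX, eval_mul, eval_X, mul_comm, hPX]
  have h1t : 1 - t ≠ 0 := sub_ne_zero.2 ht.symm
  rw [eq_div_iff h1t, ← hFtop, Lagrange.coeff_eq_sum hx hFdeg, sum_mul]
  refine sum_congr rfl fun k hk => ?_
  rw [hFx k hk, prod_div_distrib]
  ring

lemma sum_prod_erase_sub_mul_div_sub {t : K} (ht : t ≠ 1) {s : Finset ι} {x : ι → K}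
    (hx : Set.InjOn x s) :
    ∑ k ∈ s, ∏ j ∈ s.erase k, (x k - t * x j) / (x k - x j) = (1 - t ^ #s) / (1 - t) := by
  by_cases hx0 : ∀ k ∈ s, x k ≠ 0
  · exact sum_prod_erase_sub_mul_div_sub_of_ne_zero ht hx hx0
  push Not at hx0
  obtain ⟨k₀, hk₀, hxk₀⟩ := hx0
  have hne : ∀ j ∈ s.erase k₀, x j ≠ 0 := fun j hj hxj =>
    ne_of_mem_erase hj (hx (mem_of_mem_erase hj) hk₀ (hxj.trans hxk₀.symm))
  have hterm₀ : ∏ j ∈ s.erase k₀, (x k₀ - t * x j) / (x k₀ - x j) = t ^ #(s.erase k₀) := by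
    rw [← prod_const]
    refine prod_congr rfl fun j hj => ?_
    rw [hxk₀, zero_sub, zero_sub, neg_div_neg_eq, mul_div_cancel_right₀ _ (hne j hj)]
  have hterm : ∀ k ∈ s.erase k₀, ∏ j ∈ s.erase k, (x k - t * x j) / (x k - x j)
      = ∏ j ∈ (s.erase k₀).erase k, (x k - t * x j) / (x k - x j) := by
    intro k hk
    have hk₀k : k₀ ∈ s.erase k := mem_erase.2 ⟨(ne_of_mem_erase hk).symm, hk₀⟩
    rw [← mul_prod_erase _ _ hk₀k, erase_right_comm, hxk₀, mul_zero, sub_zero,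
      div_self (hne k hk), one_mul]
  have h1t : 1 - t ≠ 0 := sub_ne_zero.2 ht.symm
  rw [← add_sum_erase _ _ hk₀, hterm₀, sum_congr rfl hterm,
    sum_prod_erase_sub_mul_div_sub_of_ne_zero ht (hx.mono (erase_subset _ _)) hne,
    ← card_erase_add_one hk₀]
  field_simp
  ring

end LagrangeSum

lemma prod_lt_pairs_fin_succ {M : Type*} [CommMonoid M] (n : ℕ) (g : Fin (n+1) → Fin (n+1) → M) :
    ∏ p ∈ univ.filter (fun p : Fin (n+1) × Fin (n+1) => p.1 < p.2), g p.1 p.2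
      = (∏ j : Fin n, g 0 j.succ) *
        ∏ p ∈ univ.filter (fun p : Fin n × Fin n => p.1 < p.2), g p.1.succ p.2.succ := by
  rw [prod_filter, prod_filter, Fintype.prod_prod_type, Fintype.prod_prod_type,
    Fin.prod_univ_succ, Fin.prod_univ_succ]
  simp [Fin.succ_pos, Fin.prod_univ_succ]

lemma prod_erase_eq_prod_swap_succ {M : Type*} [CommMonoid M] {n : ℕ} (p : Fin (n+1))
    (h : Fin (n+1) → M) :
    ∏ q ∈ univ.erase p, h q = ∏ j : Fin n, h (Equiv.swap 0 p j.succ) := by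
  symm
  refine prod_nbij (fun j => Equiv.swap 0 p j.succ) ?_ ?_ ?_ (fun _ _ => rfl)
  · intro j _
    simp [Equiv.swap_apply_eq_iff, Fin.succ_ne_zero]
  · intro a _ b _ hab
    exact Fin.succ_injective n ((Equiv.swap 0 p).injective hab)
  · intro q hq
    have hq0 : Equiv.swap 0 p q ≠ 0 := by
      simpa [Equiv.swap_apply_eq_iff] using (mem_erase.1 hq).1
    obtain ⟨j, hj⟩ := Fin.eq_succ_of_ne_zero hq0
    exact ⟨j, mem_coe.2 (mem_univ j), by simp [← hj]⟩

lemma prod_lt_pairs_decomposeFin_symm {M : Type*} [CommMonoid M] {n : ℕ}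
    (g : Fin (n+1) → Fin (n+1) → M) (p : Fin (n+1)) (τ : Equiv.Perm (Fin n)) :
    ∏ q ∈ univ.filter (fun q : Fin (n+1) × Fin (n+1) => q.1 < q.2),
        g (Equiv.Perm.decomposeFin.symm (p, τ) q.1) (Equiv.Perm.decomposeFin.symm (p, τ) q.2)
      = (∏ q ∈ univ.erase p, g p q) *
        ∏ q ∈ univ.filter (fun q : Fin n × Fin n => q.1 < q.2),
          g (Equiv.swap 0 p (τ q.1).succ) (Equiv.swap 0 p (τ q.2).succ) := by
  set σ := Equiv.Perm.decomposeFin.symm (p, τ)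
  rw [prod_lt_pairs_fin_succ n (fun a b => g (σ a) (σ b)), prod_erase_eq_prod_swap_succ p,
    ← Equiv.prod_comp τ (fun j => g p (Equiv.swap 0 p j.succ))]
  simp only [σ, Equiv.Perm.decomposeFin_symm_apply_zero, Equiv.Perm.decomposeFin_symm_apply_succ]

open Finset in
theorem stmt_6_general {K : Type*} [Field K] (r : ℕ)
    (x : Fin r → K) (hx : Function.Injective x) (t : K) (ht : t ≠ 1) :
    ∑ σ : Equiv.Perm (Fin r),
      ∏ p ∈ univ.filter (fun p : Fin r × Fin r => p.1 < p.2),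
        (x (σ p.1) - t * x (σ p.2)) / (x (σ p.1) - x (σ p.2))
      = ∏ i ∈ range r, (1 - t ^ (i + 1)) / (1 - t) := by
  induction r with
  | zero => simp
  | succ n ih =>
    have hrest (p : Fin (n+1)) := ih (fun j => x (Equiv.swap 0 p j.succ))
      (hx.comp ((Equiv.swap 0 p).injective.comp (Fin.succ_injective n)))
    rw [← Equiv.sum_comp Equiv.Perm.decomposeFin.symm, Fintype.sum_prod_type]
    simp only [prod_lt_pairs_decomposeFin_symm (fun a b => (x a - t * x b) / (x a - x b)),
      ← mul_sum, hrest, ← sum_mul]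
    rw [sum_prod_erase_sub_mul_div_sub ht hx.injOn, card_univ, Fintype.card_fin,
      prod_range_succ, mul_comm]

open Finset in
/-- Hall–Littlewood identity for the zero partition:
for distinct `x_1, …, x_r` in a field `K` and `t ≠ 1`,
`∑_{σ ∈ S_r} ∏_{i<j} (x_{σ(i)} - t x_{σ(j)})/(x_{σ(i)} - x_{σ(j)})
  = ∏_{i=1}^r (1 - t^i)/(1 - t)`. -/
theorem stmt_6 {K : Type*} [Field K] (r : ℕ) (hr : 1 ≤ r)
    (x : Fin r → K) (hx : Function.Injective x) (t : K) (ht : t ≠ 1) :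
    ∑ σ : Equiv.Perm (Fin r),
      ∏ p ∈ univ.filter (fun p : Fin r × Fin r => p.1 < p.2),
        (x (σ p.1) - t * x (σ p.2)) / (x (σ p.1) - x (σ p.2))
      = ∏ i ∈ range r, (1 - t ^ (i + 1)) / (1 - t) :=
  stmt_6_general r x hx t ht
end

section
/- For distinct complex numbers λ_1, …, λ_r (i.e., with q^{-2λ_i} pairwise distinct) and h(λ) = q(q^{-2λ} - q^{-2})/(q^{-2λ} - 1), the sum A = ∑_{ρ ∈ S_r} ∏_{k<l} (-h(λ_{ρ(k)} - λ_{ρ(l)})) equals (-q)^{r(r-1)/2} ∏_{k=1}^r (1 - q^{-2k})/(1 - q^{-2}); in particular it does not depend on λ_1, …, λ_r. -/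
/-!
Write `t = q⁻²`. Summing over the value `ρ 0 = i` first, the factors involving position `0`
contribute `∏_{j ≠ i} (u_i - t u_j)/(u_i - u_j)` and the remaining factors form the same sum for
the `r - 1` points `u_j`, `j ≠ i`; so by induction it suffices to know that
`(1 - t) ∑_i ∏_{j ≠ i} (u_i - t u_j)/(u_i - u_j) = 1 - t^r`. This is the Lagrange interpolation
formula for the leading coefficient of `∏_j (X - t u_j)` at the `r + 1` nodes `0, u_1, …, u_r`:
the node `0` contributes `t^r`, and the node `u_i` contributes `1 - t` times the `i`-th summand.
-/

open Finset Polynomial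

variable {K : Type*} [Field K]

theorem mul_sum_prod_erase_sub_mul_div_sub [DecidableEq K] (s : Finset K) (hs : (0 : K) ∉ s)
    (t : K) :
    (1 - t) * ∑ x ∈ s, ∏ y ∈ s.erase x, (x - t * y) / (x - y) = 1 - t ^ #s := by
  set P : K[X] := ∏ y ∈ s, (X - C (t * y))
  have hPmonic : P.Monic := monic_prod_X_sub_C _ _
  have hzero : P.eval 0 / ∏ y ∈ s, (0 - y) = t ^ #s := by
    rw [eval_prod, ← prod_div_distrib, ← prod_const]
    refine prod_congr rfl fun y hy => ?_
    have hy0 : y ≠ 0 := ne_of_mem_of_not_mem hy hs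
    simp only [eval_sub, eval_X, eval_C, zero_sub, neg_div_neg_eq]
    field_simp
  have hnode : ∀ x ∈ s, P.eval x / ∏ y ∈ (insert 0 s).erase x, (x - y) =
      (1 - t) * ∏ y ∈ s.erase x, (x - t * y) / (x - y) := by
    intro x hx
    have hx0 : x ≠ 0 := ne_of_mem_of_not_mem hx hs
    rw [erase_insert_of_ne hx0.symm, prod_insert (fun h => hs (mem_of_mem_erase h)), eval_prod,
      ← mul_prod_erase s _ hx, prod_div_distrib]
    simp only [eval_sub, eval_X, eval_C, sub_zero]
    field_simp
  have hlead := Lagrange.leadingCoeff_eq_sum (v := id) (Set.injOn_id _) (P := P) (by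
    rw [card_insert_of_notMem hs, degree_eq_natDegree hPmonic.ne_zero,
      natDegree_finsetProd_X_sub_C_eq_card]
    norm_cast)
  simp only [id, hPmonic.leadingCoeff, sum_insert hs, erase_insert hs, sum_congr rfl hnode,
    ← mul_sum, hzero] at hlead
  linear_combination -hlead

theorem mul_sum_prod_erase_sub_mul_div_sub_of_injective {ι : Type*} [Fintype ι] [DecidableEq ι]
    {u : ι → K} (hu : Function.Injective u) (hu0 : ∀ i, u i ≠ 0) (t : K) :
    (1 - t) * ∑ i, ∏ j ∈ univ.erase i, (u i - t * u j) / (u i - u j) =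
      1 - t ^ Fintype.card ι := by
  classical
  have h := mul_sum_prod_erase_sub_mul_div_sub (univ.image u) (by simpa using hu0) t
  rw [sum_image hu.injOn, card_image_of_injective _ hu, card_univ] at h
  simpa only [← image_erase hu, prod_image hu.injOn] using h

theorem prod_filter_lt_eq_prod_prod_Ioi {α M : Type*} [Fintype α] [LinearOrder α]
    [LocallyFiniteOrderTop α] [CommMonoid M] (f : α → α → M) :
    ∏ p ∈ univ.filter (fun p : α × α => p.1 < p.2), f p.1 p.2 = ∏ i, ∏ j ∈ Ioi i, f i j :=
  prod_finset_product' _ _ _ (by simp)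

section Perm

open Equiv Equiv.Perm

variable {M : Type*} [CommMonoid M] {n : ℕ}

theorem prod_erase_eq_prod_swap_succ_s7 (i : Fin (n + 1)) (g : Fin (n + 1) → M) :
    ∏ j ∈ univ.erase i, g j = ∏ m : Fin n, g (swap 0 i m.succ) := by
  rw [← Fin.prod_Ioi_zero (fun k => g (swap 0 i k))]
  refine (prod_equiv (swap 0 i) (fun k => ?_) (fun _ _ => rfl)).symm
  simp [swap_apply_eq_iff]

theorem prod_filter_lt_decomposeFin_symm (f : Fin (n + 1) → Fin (n + 1) → M) (i : Fin (n + 1))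
    (e : Perm (Fin n)) :
    ∏ p ∈ univ.filter (fun p : Fin (n + 1) × Fin (n + 1) => p.1 < p.2),
        f (decomposeFin.symm (i, e) p.1) (decomposeFin.symm (i, e) p.2) =
      (∏ j ∈ univ.erase i, f i j) *
        ∏ p ∈ univ.filter (fun p : Fin n × Fin n => p.1 < p.2),
          f (swap 0 i (e p.1).succ) (swap 0 i (e p.2).succ) := by
  set σ := decomposeFin.symm (i, e)
  rw [prod_filter_lt_eq_prod_prod_Ioi (fun a b => f (σ a) (σ b)),
    prod_filter_lt_eq_prod_prod_Ioi (fun a b => f (swap 0 i (e a).succ) (swap 0 i (e b).succ)),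
    Fin.prod_univ_succ, Fin.prod_Ioi_zero, prod_erase_eq_prod_swap_succ_s7 i (f i)]
  simp only [σ, Fin.prod_Ioi_succ, decomposeFin_symm_apply_zero, decomposeFin_symm_apply_succ]
  rw [Equiv.prod_comp e (fun m => f i (swap 0 i m.succ))]

theorem sum_perm_prod_filter_lt_sub_mul_div_sub {t : K} (ht : t ≠ 1)
    {u : Fin n → K} (hu : Function.Injective u) (hu0 : ∀ i, u i ≠ 0) :
    ∑ ρ : Perm (Fin n), ∏ p ∈ univ.filter (fun p : Fin n × Fin n => p.1 < p.2),
        (u (ρ p.1) - t * u (ρ p.2)) / (u (ρ p.1) - u (ρ p.2)) =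
      ∏ k ∈ range n, (1 - t ^ (k + 1)) / (1 - t) := by
  classical
  induction n with
  | zero => simp
  | succ n ih =>
    have hsum : ∑ i, ∏ j ∈ univ.erase i, (u i - t * u j) / (u i - u j) =
        (1 - t ^ (n + 1)) / (1 - t) := by
      rw [eq_div_iff (sub_ne_zero.2 ht.symm), mul_comm,
        mul_sum_prod_erase_sub_mul_div_sub_of_injective hu hu0, Fintype.card_fin]
    rw [← decomposeFin.symm.sum_comp, Fintype.sum_prod_type]
    simp_rw [prod_filter_lt_decomposeFin_symm (fun a b => (u a - t * u b) / (u a - u b)),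
      ← mul_sum]
    rw [sum_congr rfl fun i _ => congrArg _ (ih (u := fun m => u (swap 0 i m.succ))
        (hu.comp ((Equiv.injective _).comp (Fin.succ_injective _))) fun _ => hu0 _),
      ← sum_mul, hsum, prod_range_succ, mul_comm]

end Perm

open Finset in
theorem stmt_7_general (r : ℕ) (q : ℂ)
    (hqk : ∀ k : ℕ, 1 ≤ k → k ≤ r → q ^ (2 * k) ≠ 1)
    (u : Fin r → ℂ) (hu : Function.Injective u) (hu0 : ∀ i, u i ≠ 0) :
    ∑ ρ : Equiv.Perm (Fin r),
      ∏ p ∈ univ.filter (fun p : Fin r × Fin r => p.1 < p.2),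
        (-q) * (u (ρ p.1) - (q ^ 2)⁻¹ * u (ρ p.2)) / (u (ρ p.1) - u (ρ p.2))
      = (-q) ^ (r * (r - 1) / 2) *
          ∏ k ∈ range r, (1 - ((q ^ 2)⁻¹) ^ (k + 1)) / (1 - (q ^ 2)⁻¹) := by
  rcases Nat.eq_zero_or_pos r with rfl | hr
  · simp
  have ht : (q ^ 2)⁻¹ ≠ 1 := inv_ne_one.2 (by simpa using hqk 1 le_rfl hr)
  have hcard : #(univ.filter (fun p : Fin r × Fin r => p.1 < p.2)) = r * (r - 1) / 2 := by
    rw [Fintype.card_product_filter_lt, Fintype.card_fin, Nat.choose_two_right]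
  simp_rw [mul_div_assoc, prod_mul_distrib, prod_const, hcard, ← mul_sum]
  rw [sum_perm_prod_filter_lt_sub_mul_div_sub ht hu hu0]

open Finset in
/-- for pairwise distinct nonzero `u_i = q^{-2λ_i}`, with
`-h(λ_i - λ_j) = -q (u_i - q^{-2}u_j)/(u_i - u_j)`,
`∑_{ρ ∈ S_r} ∏_{k<l} (-q)(u_{ρ(k)} - q^{-2}u_{ρ(l)})/(u_{ρ(k)} - u_{ρ(l)})
  = (-q)^{r(r-1)/2} ∏_{k=1}^r (1 - q^{-2k})/(1 - q^{-2})`;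
in particular the sum does not depend on `λ_1, …, λ_r`. -/
theorem stmt_7 (r : ℕ) (q : ℂ) (hq : q ≠ 0)
    (hqk : ∀ k : ℕ, 1 ≤ k → k ≤ r → q ^ (2 * k) ≠ 1)
    (u : Fin r → ℂ) (hu : Function.Injective u) (hu0 : ∀ i, u i ≠ 0) :
    ∑ ρ : Equiv.Perm (Fin r),
      ∏ p ∈ univ.filter (fun p : Fin r × Fin r => p.1 < p.2),
        (-q) * (u (ρ p.1) - (q ^ 2)⁻¹ * u (ρ p.2)) / (u (ρ p.1) - u (ρ p.2))
      = (-q) ^ (r * (r - 1) / 2) *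
          ∏ k ∈ range r, (1 - ((q ^ 2)⁻¹) ^ (k + 1)) / (1 - (q ^ 2)⁻¹) :=
  stmt_7_general r q hqk u hu hu0
end

section
/- In the algebra W generated over the field M of meromorphic functions on ℂ^n by w_1, …, w_n with relations w_i² = 0, w_j w_i = -h(λ_j - λ_i) w_i w_j for i < j, and f(λ)w_i = w_i f(λ + e_i), the monomials w_I = w_{i_1}⋯w_{i_r} over ordered subsets I = {i_1 < ⋯ < i_r} of {1,…,n} form a basis; in particular dim_M W = 2^n. -/
/- Throughout, the field `M` of meromorphic functions of `λ ∈ ℂ^n` entering the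
dynamical quantum group relations is modelled concretely as the field of rational
functions in the variables `x_i = q^{-2λ_i}`: all coefficient functions appearing in
the relations (the functions `h(λ_a - λ_b)`, `g(λ_a - λ_b)`) are of this form, and the
shift `λ ↦ λ + e_i` corresponds to the field automorphism scaling `x_i` by `q^{-2}`. -/

noncomputable section

/-- The coefficient field: rational functions in `x_1, …, x_n`, `x_i = q^{-2λ_i}`. -/
abbrev MF (n : ℕ) := FractionRing (MvPolynomial (Fin n) ℂ)

/-- The variable `x_i`, modelling `q^{-2λ_i}`. -/
def xv (n : ℕ) (i : Fin n) : MF n :=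
  algebraMap (MvPolynomial (Fin n) ℂ) (MF n) (MvPolynomial.X i)

/-- `hE a b` models `h(λ_a - λ_b) = q (q^{-2(λ_a-λ_b)} - q^{-2})/(q^{-2(λ_a-λ_b)} - 1)
  = q (x_a - q^{-2} x_b)/(x_a - x_b)`. -/
def hE (n : ℕ) (q : ℂ) (a b : Fin n) : MF n :=
  algebraMap ℂ (MF n) q * (xv n a - algebraMap ℂ (MF n) ((q ^ 2)⁻¹) * xv n b)
    / (xv n a - xv n b)

/-- `gE a b` models `g(λ_a - λ_b) = h(λ_a - λ_b) h(λ_b - λ_a)`. -/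
def gE (n : ℕ) (q : ℂ) (a b : Fin n) : MF n := hE n q a b * hE n q b a

/-- Scaling each variable `x_j` by the constant `c j`. -/
def scaleHom (n : ℕ) (c : Fin n → ℂ) :
    MvPolynomial (Fin n) ℂ →ₐ[ℂ] MvPolynomial (Fin n) ℂ :=
  MvPolynomial.aeval fun j => MvPolynomial.C (c j) * MvPolynomial.X j

/-- Scaling the variables by nonzero constants, as an algebra automorphism. -/
def scaleEquiv (n : ℕ) (c : Fin n → ℂ) (hc : ∀ j, c j ≠ 0) :
    MvPolynomial (Fin n) ℂ ≃ₐ[ℂ] MvPolynomial (Fin n) ℂ :=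
  AlgEquiv.ofAlgHom (scaleHom n c) (scaleHom n fun j => (c j)⁻¹)
    (by
      apply MvPolynomial.algHom_ext
      intro j
      simp only [scaleHom, AlgHom.coe_comp, Function.comp_apply, MvPolynomial.aeval_X, map_mul,
        MvPolynomial.aeval_C, MvPolynomial.algebraMap_eq, AlgHom.coe_id, id_eq]
      rw [← mul_assoc, ← map_mul, inv_mul_cancel₀ (hc j), MvPolynomial.C_1, one_mul])
    (by
      apply MvPolynomial.algHom_ext
      intro j
      simp only [scaleHom, AlgHom.coe_comp, Function.comp_apply, MvPolynomial.aeval_X, map_mul,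
        MvPolynomial.aeval_C, MvPolynomial.algebraMap_eq, AlgHom.coe_id, id_eq]
      rw [← mul_assoc, ← map_mul, mul_inv_cancel₀ (hc j), MvPolynomial.C_1, one_mul])

/-- The shift `T_{e_i} : f(λ) ↦ f(λ + e_i)`, modelled as the field automorphism of
`MF n` scaling the variable `x_i = q^{-2λ_i}` by `q^{-2}`. -/
def TShift (n : ℕ) (q : ℂ) (hq : q ≠ 0) (i : Fin n) : MF n ≃+* MF n :=
  IsFractionRing.ringEquivOfRingEquiv
    (scaleEquiv n (fun j => if j = i then (q ^ 2)⁻¹ else 1)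
      (by
        intro j
        try dsimp only
        split_ifs
        · exact inv_ne_zero (pow_ne_zero _ hq)
        · exact one_ne_zero)).toRingEquiv

end

noncomputable section

/-- Generators of the dynamical exterior algebra `W`: the `w_i` and the
coefficient functions `f(λ) ∈ M`. -/
inductive WGen (n : ℕ) : Type
  | w : Fin n → WGen n
  | fn : MF n → WGen n

open FreeAlgebra in
/-- The defining relations of `W`: the copy of `M` is embedded as a subalgebra,
`w_i² = 0`, `w_j w_i = -h(λ_j - λ_i) w_i w_j` for `i < j`, and
`f(λ) w_i = w_i f(λ + e_i)`. -/
inductive WRel (n : ℕ) (q : ℂ) (hq : q ≠ 0) :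
    FreeAlgebra ℂ (WGen n) → FreeAlgebra ℂ (WGen n) → Prop
  | fn_one : WRel n q hq (ι ℂ (WGen.fn 1)) 1
  | fn_smul (c : ℂ) (k : MF n) :
      WRel n q hq (ι ℂ (WGen.fn (c • k))) (c • ι ℂ (WGen.fn k))
  | fn_add (k l : MF n) :
      WRel n q hq (ι ℂ (WGen.fn (k + l))) (ι ℂ (WGen.fn k) + ι ℂ (WGen.fn l))
  | fn_mul (k l : MF n) :
      WRel n q hq (ι ℂ (WGen.fn (k * l))) (ι ℂ (WGen.fn k) * ι ℂ (WGen.fn l))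
  | w_sq (i : Fin n) : WRel n q hq (ι ℂ (WGen.w i) * ι ℂ (WGen.w i)) 0
  | w_comm {i j : Fin n} (hij : i < j) :
      WRel n q hq (ι ℂ (WGen.w j) * ι ℂ (WGen.w i))
        (-(ι ℂ (WGen.fn (hE n q j i)) * (ι ℂ (WGen.w i) * ι ℂ (WGen.w j))))
  | w_shift (k : MF n) (i : Fin n) :
      WRel n q hq (ι ℂ (WGen.fn k) * ι ℂ (WGen.w i))
        (ι ℂ (WGen.w i) * ι ℂ (WGen.fn (TShift n q hq i k)))

/-- The dynamical exterior algebra `W`. -/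
abbrev WAlg (n : ℕ) (q : ℂ) (hq : q ≠ 0) := RingQuot (WRel n q hq)

/-- The embedding `μ_W : M → W` of the coefficient functions. -/
def μW (n : ℕ) (q : ℂ) (hq : q ≠ 0) (k : MF n) : WAlg n q hq :=
  RingQuot.mkRingHom (WRel n q hq) (FreeAlgebra.ι ℂ (WGen.fn k))

/-- The generator `w_i ∈ W`. -/
def wg (n : ℕ) (q : ℂ) (hq : q ≠ 0) (i : Fin n) : WAlg n q hq :=
  RingQuot.mkRingHom (WRel n q hq) (FreeAlgebra.ι ℂ (WGen.w i))

/-- `w_I = w_{i_1} ⋯ w_{i_r}` for an ordered subset `I = {i_1 < ⋯ < i_r}`. -/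
def wI (n : ℕ) (q : ℂ) (hq : q ≠ 0) (I : Finset (Fin n)) : WAlg n q hq :=
  ((I.sort (· ≤ ·)).map (wg n q hq)).prod

end

/-! Spanning: the set of sums `∑ μ(c_I) w_I` is stable under left multiplication by the
generators, since `w_i μ(k) = μ(T_{e_i}⁻¹ k) w_i` and `w_i w_I` is either `0` (if `i ∈ I`) or
`μ(∏_{j ∈ I, j < i} (-h(λ_i - λ_j))) w_{I ∪ {i}}`; it contains `1`, so it is all of `W`.

Uniqueness: the same formulas define an action of `W` on the functions `Finset (Fin n) → M`,
in which `w_I` sends `δ_∅` to `δ_I`; so applying `∑ μ(c_I) w_I` to `δ_∅` recovers `c`. -/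

namespace DynamicalExterior

open Finset

variable {n : ℕ} {q : ℂ} {hq : q ≠ 0}

lemma TShift_algebraMap (i : Fin n) (p : MvPolynomial (Fin n) ℂ) :
    TShift n q hq i (algebraMap _ (MF n) p) =
      algebraMap _ (MF n) (scaleHom n (fun j => if j = i then (q ^ 2)⁻¹ else 1) p) := by
  simp [TShift, scaleEquiv]

lemma TShift_algebraMap_complex (i : Fin n) (z : ℂ) :
    TShift n q hq i (algebraMap ℂ (MF n) z) = algebraMap ℂ (MF n) z := by
  rw [IsScalarTower.algebraMap_apply ℂ (MvPolynomial (Fin n) ℂ), TShift_algebraMap,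
    AlgHom.commutes]

lemma TShift_xv (i j : Fin n) :
    TShift n q hq i (xv n j) =
      (if j = i then algebraMap ℂ (MF n) (q ^ 2)⁻¹ else 1) * xv n j := by
  rw [xv, TShift_algebraMap, scaleHom, MvPolynomial.aeval_X, map_mul,
    ← MvPolynomial.algebraMap_eq, ← IsScalarTower.algebraMap_apply, apply_ite (algebraMap ℂ _),
    map_one]

lemma TShift_xv_of_ne {i j : Fin n} (h : j ≠ i) : TShift n q hq i (xv n j) = xv n j := by
  rw [TShift_xv, if_neg h, one_mul]

lemma TShift_hE {m a b : Fin n} (ha : a ≠ m) (hb : b ≠ m) :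
    TShift n q hq m (hE n q a b) = hE n q a b := by
  simp only [hE, map_div₀, map_mul, map_sub, TShift_algebraMap_complex, TShift_xv_of_ne ha,
    TShift_xv_of_ne hb]

lemma TShift_comm (i j : Fin n) (x : MF n) :
    TShift n q hq i (TShift n q hq j x) = TShift n q hq j (TShift n q hq i x) := by
  suffices h : (TShift n q hq i : MF n →+* MF n).comp (TShift n q hq j : MF n →+* MF n) =
      (TShift n q hq j : MF n →+* MF n).comp (TShift n q hq i : MF n →+* MF n) from
    RingHom.congr_fun h x
  apply IsLocalization.ringHom_ext (nonZeroDivisors (MvPolynomial (Fin n) ℂ))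
  rw [RingHom.comp_assoc, RingHom.comp_assoc]
  refine MvPolynomial.ringHom_ext (fun z => ?_) (fun p => ?_)
  · simp only [RingHom.comp_apply, RingHom.coe_coe]
    rw [← MvPolynomial.algebraMap_eq, ← IsScalarTower.algebraMap_apply]
    simp only [TShift_algebraMap_complex]
  · simp only [RingHom.comp_apply, RingHom.coe_coe]
    rw [show algebraMap _ (MF n) (MvPolynomial.X p) = xv n p from rfl]
    simp only [TShift_xv, map_mul, apply_ite (TShift n q hq _), TShift_algebraMap_complex, map_one]
    ring

lemma TShift_symm_algebraMap_complex (i : Fin n) (z : ℂ) :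
    (TShift n q hq i).symm (algebraMap ℂ (MF n) z) = algebraMap ℂ (MF n) z := by
  rw [RingEquiv.symm_apply_eq, TShift_algebraMap_complex]

lemma TShift_symm_smul (i : Fin n) (z : ℂ) (x : MF n) :
    (TShift n q hq i).symm (z • x) = z • (TShift n q hq i).symm x := by
  rw [Algebra.smul_def, map_mul, TShift_symm_algebraMap_complex, ← Algebra.smul_def]

lemma TShift_symm_hE {m a b : Fin n} (ha : a ≠ m) (hb : b ≠ m) :
    (TShift n q hq m).symm (hE n q a b) = hE n q a b := by
  rw [RingEquiv.symm_apply_eq, TShift_hE ha hb]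

lemma TShift_symm_comm (i j : Fin n) (x : MF n) :
    (TShift n q hq i).symm ((TShift n q hq j).symm x) =
      (TShift n q hq j).symm ((TShift n q hq i).symm x) := by
  apply (TShift n q hq j).injective
  apply (TShift n q hq i).injective
  rw [TShift_comm i j]
  simp only [RingEquiv.apply_symm_apply]

lemma μW_one : μW n q hq 1 = 1 := by
  rw [μW, RingQuot.mkRingHom_rel WRel.fn_one, map_one]

lemma μW_mul (k l : MF n) : μW n q hq (k * l) = μW n q hq k * μW n q hq l := by
  rw [μW, RingQuot.mkRingHom_rel (WRel.fn_mul k l), map_mul]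
  rfl

lemma μW_add (k l : MF n) : μW n q hq (k + l) = μW n q hq k + μW n q hq l := by
  rw [μW, RingQuot.mkRingHom_rel (WRel.fn_add k l), map_add]
  rfl

lemma μW_zero : μW n q hq 0 = 0 := by
  simpa using μW_add (hq := hq) (0 : MF n) 0

lemma μW_neg (k : MF n) : μW n q hq (-k) = -μW n q hq k :=
  eq_neg_of_add_eq_zero_left (by rw [← μW_add, neg_add_cancel, μW_zero])

lemma μW_smul (z : ℂ) (k : MF n) : μW n q hq (z • k) = z • μW n q hq k := by
  have hμ (k : MF n) :
      μW n q hq k = RingQuot.mkAlgHom ℂ (WRel n q hq) (FreeAlgebra.ι ℂ (WGen.fn k)) := by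
    rw [μW, ← RingQuot.mkAlgHom_coe ℂ]
    rfl
  rw [hμ, hμ, ← map_smul]
  exact RingQuot.mkAlgHom_rel ℂ (WRel.fn_smul z k)

lemma wg_mul_self (i : Fin n) : wg n q hq i * wg n q hq i = 0 := by
  have h := RingQuot.mkRingHom_rel (WRel.w_sq (q := q) (hq := hq) i)
  rwa [map_mul, map_zero] at h

lemma wg_mul_wg_of_lt {i j : Fin n} (hij : i < j) :
    wg n q hq j * wg n q hq i = μW n q hq (-hE n q j i) * (wg n q hq i * wg n q hq j) := by
  have h := RingQuot.mkRingHom_rel (WRel.w_comm (q := q) (hq := hq) hij)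
  rw [map_neg, map_mul, map_mul, map_mul] at h
  rw [μW_neg]
  exact h.trans (neg_mul (μW n q hq (hE n q j i)) (wg n q hq i * wg n q hq j)).symm

lemma μW_mul_wg (k : MF n) (i : Fin n) :
    μW n q hq k * wg n q hq i = wg n q hq i * μW n q hq (TShift n q hq i k) := by
  have h := RingQuot.mkRingHom_rel (WRel.w_shift (hq := hq) k i)
  rwa [map_mul, map_mul] at h

lemma wg_mul_μW (i : Fin n) (k : MF n) :
    wg n q hq i * μW n q hq k = μW n q hq ((TShift n q hq i).symm k) * wg n q hq i := by
  rw [μW_mul_wg, RingEquiv.apply_symm_apply]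

lemma wI_empty : wI n q hq ∅ = 1 := by
  simp [wI]

lemma wI_insert_of_forall_lt {i : Fin n} {s : Finset (Fin n)} (h : ∀ j ∈ s, i < j) :
    wI n q hq (insert i s) = wg n q hq i * wI n q hq s := by
  rw [wI, sort_insert _ (fun j hj => (h j hj).le) (fun hi => lt_irrefl i (h i hi))]
  rfl

variable (n q) in
noncomputable def insertCoeff (i : Fin n) (s : Finset (Fin n)) : MF n :=
  ∏ j ∈ s with j < i, -hE n q i j

lemma insertCoeff_insert_of_lt {i j : Fin n} {s : Finset (Fin n)} (hji : j < i) (hj : j ∉ s) :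
    insertCoeff n q i (insert j s) = -hE n q i j * insertCoeff n q i s := by
  rw [insertCoeff, filter_insert, if_pos hji, prod_insert (fun h => hj (mem_filter.mp h).1),
    insertCoeff]

lemma insertCoeff_insert_of_not_lt {i j : Fin n} {s : Finset (Fin n)} (hji : ¬j < i) :
    insertCoeff n q i (insert j s) = insertCoeff n q i s := by
  rw [insertCoeff, filter_insert, if_neg hji, insertCoeff]

lemma insertCoeff_of_forall_lt {i : Fin n} {s : Finset (Fin n)} (h : ∀ j ∈ s, i < j) :
    insertCoeff n q i s = 1 :=
  prod_eq_one fun j hj => absurd (h j (mem_filter.mp hj).1) (mem_filter.mp hj).2.asymm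

lemma TShift_symm_insertCoeff {m i : Fin n} {s : Finset (Fin n)} (hmi : i ≠ m) (hm : m ∉ s) :
    (TShift n q hq m).symm (insertCoeff n q i s) = insertCoeff n q i s := by
  rw [insertCoeff, map_prod]
  refine prod_congr rfl fun j hj => ?_
  rw [map_neg, TShift_symm_hE hmi fun h => hm (h ▸ (mem_filter.mp hj).1)]

lemma wg_mul_wI (i : Fin n) (s : Finset (Fin n)) :
    wg n q hq i * wI n q hq s =
      if i ∈ s then 0 else μW n q hq (insertCoeff n q i s) * wI n q hq (insert i s) := by
  induction s using Finset.induction_on_min generalizing i with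
  | empty =>
    rw [if_neg (notMem_empty i), insertCoeff_of_forall_lt (by simp), μW_one, one_mul,
      wI_insert_of_forall_lt (by simp)]
  | insert a s has ih =>
    rw [wI_insert_of_forall_lt has]
    rcases lt_trichotomy i a with hia | rfl | hai
    · have hi : ∀ j ∈ insert a s, i < j := by
        simpa [hia] using fun j hj => hia.trans (has j hj)
      rw [if_neg fun h => (hi i h).false, insertCoeff_of_forall_lt hi, μW_one, one_mul,
        wI_insert_of_forall_lt hi, wI_insert_of_forall_lt has]
    · rw [if_pos (mem_insert_self i s), ← mul_assoc, wg_mul_self, zero_mul]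
    · have has' : a ∉ s := fun h => (has a h).false
      rw [← mul_assoc, wg_mul_wg_of_lt hai, mul_assoc, mul_assoc, ih]
      by_cases his : i ∈ s
      · rw [if_pos his, if_pos (mem_insert_of_mem his), mul_zero, mul_zero]
      · have hai' : ∀ j ∈ insert i s, a < j := by simpa [hai] using has
        rw [if_neg his, if_neg (by simp [hai.ne', his]), ← mul_assoc (wg n q hq a), wg_mul_μW,
          TShift_symm_insertCoeff hai.ne' has', mul_assoc, ← wI_insert_of_forall_lt hai',
          ← mul_assoc, ← μW_mul, insertCoeff_insert_of_lt hai has', Finset.insert_comm]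

variable (n q hq) in
def monomialSpan : Submodule ℂ (WAlg n q hq) where
  carrier := {x | ∃ c : Finset (Fin n) → MF n, x = ∑ I, μW n q hq (c I) * wI n q hq I}
  zero_mem' := ⟨0, by simp [μW_zero]⟩
  add_mem' := by
    rintro _ _ ⟨c, rfl⟩ ⟨d, rfl⟩
    exact ⟨c + d, by simp only [Pi.add_apply, μW_add, add_mul, sum_add_distrib]⟩
  smul_mem' := by
    rintro z _ ⟨c, rfl⟩
    exact ⟨z • c, by simp only [Pi.smul_apply, μW_smul, smul_mul_assoc, smul_sum]⟩

lemma μW_mul_wI_mem_monomialSpan (k : MF n) (s : Finset (Fin n)) :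
    μW n q hq k * wI n q hq s ∈ monomialSpan n q hq := by
  refine ⟨Pi.single s k, ?_⟩
  rw [Fintype.sum_eq_single s fun I hI => by rw [Pi.single_eq_of_ne hI, μW_zero, zero_mul],
    Pi.single_eq_same]

lemma μW_mul_mem_monomialSpan {x : WAlg n q hq} (hx : x ∈ monomialSpan n q hq) (k : MF n) :
    μW n q hq k * x ∈ monomialSpan n q hq := by
  obtain ⟨c, rfl⟩ := hx
  rw [mul_sum]
  refine sum_mem fun I _ => ?_
  rw [← mul_assoc, ← μW_mul]
  exact μW_mul_wI_mem_monomialSpan _ _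

lemma wg_mul_mem_monomialSpan {x : WAlg n q hq} (hx : x ∈ monomialSpan n q hq) (i : Fin n) :
    wg n q hq i * x ∈ monomialSpan n q hq := by
  obtain ⟨c, rfl⟩ := hx
  rw [mul_sum]
  refine sum_mem fun I _ => ?_
  rw [← mul_assoc, wg_mul_μW, mul_assoc, wg_mul_wI]
  split_ifs
  · rw [mul_zero]
    exact zero_mem _
  · rw [← mul_assoc, ← μW_mul]
    exact μW_mul_wI_mem_monomialSpan _ _

lemma mem_monomialSpan (x : WAlg n q hq) : x ∈ monomialSpan n q hq := by
  suffices h : ∀ y ∈ monomialSpan n q hq, x * y ∈ monomialSpan n q hq by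
    simpa using h 1 (by simpa [μW_one, wI_empty] using μW_mul_wI_mem_monomialSpan (hq := hq) 1 ∅)
  obtain ⟨x, rfl⟩ := RingQuot.mkRingHom_surjective (WRel n q hq) x
  induction x using FreeAlgebra.induction with
  | grade0 z =>
    intro y hy
    rw [← RingQuot.mkAlgHom_coe ℂ, AlgHom.coe_toRingHom, AlgHom.commutes, ← Algebra.smul_def]
    exact Submodule.smul_mem _ z hy
  | grade1 g =>
    cases g with
    | w i => exact fun y hy => wg_mul_mem_monomialSpan hy i
    | fn k => exact fun y hy => μW_mul_mem_monomialSpan hy k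
  | mul a b ha hb =>
    intro y hy
    rw [map_mul, mul_assoc]
    exact ha _ (hb y hy)
  | add a b ha hb =>
    intro y hy
    rw [map_add, add_mul]
    exact add_mem (ha y hy) (hb y hy)

variable (n q hq) in
/-- `(w_i c)_J` is the coefficient of `w_J` in `w_i ∑ μ(c_I) w_I`. -/
noncomputable def wAction (i : Fin n) : Module.End ℂ (Finset (Fin n) → MF n) where
  toFun c J :=
    if i ∈ J then (TShift n q hq i).symm (c (J.erase i)) * insertCoeff n q i (J.erase i) else 0
  map_add' c d := by
    ext J
    split_ifs <;> simp [add_mul, *]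
  map_smul' z c := by
    ext J
    split_ifs <;> simp [TShift_symm_smul, *]

lemma wAction_single (i : Fin n) (s : Finset (Fin n)) (k : MF n) :
    wAction n q hq i (Pi.single s k) =
      if i ∈ s then 0
      else Pi.single (insert i s) ((TShift n q hq i).symm k * insertCoeff n q i s) := by
  ext J
  simp only [wAction, LinearMap.coe_mk, AddHom.coe_mk]
  by_cases hs : i ∈ s
  · have hJ : J.erase i ≠ s := fun h => notMem_erase i J (h ▸ hs)
    simp [hs, hJ]
  · rcases eq_or_ne J (insert i s) with rfl | hJ
    · simp [hs]
    · by_cases hi : i ∈ J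
      · have hJ' : J.erase i ≠ s := fun h => hJ (by rw [← h, insert_erase hi])
        simp [hs, hi, hJ, hJ']
      · simp [hs, hi, hJ]

lemma wAction_mul_self (i : Fin n) : wAction n q hq i * wAction n q hq i = 0 := by
  refine LinearMap.pi_ext fun s k => ?_
  rw [Module.End.mul_apply, wAction_single, LinearMap.zero_apply]
  split_ifs
  · exact map_zero _
  · rw [wAction_single, if_pos (mem_insert_self i s)]

lemma wAction_mul_wAction_of_lt {i j : Fin n} (hij : i < j) :
    wAction n q hq j * wAction n q hq i =
      -(Algebra.lsmul ℂ ℂ _ (hE n q j i) * (wAction n q hq i * wAction n q hq j)) := by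
  refine LinearMap.pi_ext fun s k => ?_
  simp only [Module.End.mul_apply, LinearMap.neg_apply, Algebra.lsmul_apply]
  by_cases hi : i ∈ s
  · by_cases hj : j ∈ s <;> simp [wAction_single, hi, hj]
  by_cases hj : j ∈ s
  · simp [wAction_single, hi, hj]
  rw [wAction_single, wAction_single, if_neg hi, if_neg hj, wAction_single, wAction_single,
    if_neg (by simp [hij.ne', hj]), if_neg (by simp [hij.ne, hi]), insert_comm,
    ← Pi.single_smul', ← Pi.single_neg, insertCoeff_insert_of_lt hij hi,
    insertCoeff_insert_of_not_lt hij.asymm, map_mul, map_mul,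
    TShift_symm_insertCoeff hij.ne hj, TShift_symm_insertCoeff hij.ne' hi, TShift_symm_comm,
    smul_eq_mul]
  congr 1
  ring

lemma lsmul_mul_wAction (k : MF n) (i : Fin n) :
    Algebra.lsmul ℂ ℂ _ k * wAction n q hq i =
      wAction n q hq i * Algebra.lsmul ℂ ℂ _ (TShift n q hq i k) := by
  refine LinearMap.pi_ext fun s l => ?_
  simp only [Module.End.mul_apply, Algebra.lsmul_apply, ← Pi.single_smul', wAction_single]
  split_ifs
  · exact smul_zero k
  · simp only [← Pi.single_smul', smul_eq_mul]
    rw [map_mul, RingEquiv.symm_apply_apply, mul_assoc]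

variable (n q hq) in
noncomputable def genAction : WGen n → Module.End ℂ (Finset (Fin n) → MF n)
  | .w i => wAction n q hq i
  | .fn k => Algebra.lsmul ℂ ℂ _ k

variable (n q hq) in
noncomputable def regularRep : WAlg n q hq →ₐ[ℂ] Module.End ℂ (Finset (Fin n) → MF n) :=
  RingQuot.liftAlgHom ℂ ⟨FreeAlgebra.lift ℂ (genAction n q hq), fun x y h => by
    induction h with
    | fn_one => simp [genAction]
    | fn_smul z k => simp [genAction]
    | fn_add k l => simp [genAction]
    | fn_mul k l => simp [genAction]
    | w_sq i => simpa [genAction] using wAction_mul_self i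
    | w_comm hij => simpa [genAction] using wAction_mul_wAction_of_lt hij
    | w_shift k i => simpa [genAction] using lsmul_mul_wAction k i⟩

lemma regularRep_mk (g : WGen n) :
    regularRep n q hq (RingQuot.mkRingHom (WRel n q hq) (FreeAlgebra.ι ℂ g)) =
      genAction n q hq g := by
  rw [← RingQuot.mkAlgHom_coe ℂ, AlgHom.coe_toRingHom, regularRep,
    RingQuot.liftAlgHom_mkAlgHom_apply, FreeAlgebra.lift_ι_apply]

lemma regularRep_wI_single_empty (s : Finset (Fin n)) :
    regularRep n q hq (wI n q hq s) (Pi.single ∅ 1) = Pi.single s 1 := by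
  induction s using Finset.induction_on_min with
  | empty => rw [wI_empty, map_one, Module.End.one_apply]
  | insert a s has ih =>
    rw [wI_insert_of_forall_lt has, map_mul, Module.End.mul_apply, ih, wg, regularRep_mk,
      genAction, wAction_single, if_neg fun h => (has a h).false, map_one, one_mul,
      insertCoeff_of_forall_lt has]

lemma regularRep_sum_apply_single_empty (c : Finset (Fin n) → MF n) :
    regularRep n q hq (∑ I, μW n q hq (c I) * wI n q hq I) (Pi.single ∅ 1) = c := by
  simp only [map_sum, map_mul, LinearMap.sum_apply, Module.End.mul_apply,
    regularRep_wI_single_empty, μW, regularRep_mk, genAction, Algebra.lsmul_apply,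
    ← Pi.single_smul', smul_eq_mul, mul_one]
  exact univ_sum_single c

end DynamicalExterior

open Finset in
theorem stmt_9_general (n : ℕ) (q : ℂ) (hq : q ≠ 0) :
    ∀ x : WAlg n q hq, ∃! c : Finset (Fin n) → MF n,
      x = ∑ I : Finset (Fin n), μW n q hq (c I) * wI n q hq I := by
  intro x
  obtain ⟨c, hc⟩ := DynamicalExterior.mem_monomialSpan x
  refine ⟨c, hc, fun d hd => ?_⟩
  rw [← DynamicalExterior.regularRep_sum_apply_single_empty (hq := hq) d, ← hd, hc,
    DynamicalExterior.regularRep_sum_apply_single_empty]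

open Finset in
/-- the ordered monomials `w_I`, `I ⊆ {1,…,n}`, form a basis of the
dynamical exterior algebra `W` over the coefficient field `M`
(acting via the left moment map `μ_W`); in particular `dim_M W = 2^n`. -/
theorem stmt_9 (n : ℕ) (q : ℂ) (hq : q ≠ 0) (hgen : ∀ k : ℕ, 1 ≤ k → q ^ (2 * k) ≠ 1) :
    ∀ x : WAlg n q hq, ∃! c : Finset (Fin n) → MF n,
      x = ∑ I : Finset (Fin n), μW n q hq (c I) * wI n q hq I :=
  stmt_9_general n q hq
end
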